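/- Let F be a nonarchimedean local field with ring of integers O, unit group U_F = O^×, and uniformizer ϖ. Let E be a smooth F*-module (every vector has open stabilizer in F* for the induced topology) with a finite filtration 0 = E₀ ⊆ E₁ ⊆ ... ⊆ E_r = E by F*-submodules such that F* acts by a character c_{i+1} on each quotient E_{i+1}/E_i. Then every vector v ∈ E lies in a finite-dimensional F*-invariant subspace of E. -/

import Mathlib

/-! By smoothness and compactness of `U_F`, the `U_F`-orbit `S` of `v` is finite. Running down
the filtration shows that `∏ᵢ (X - cᵢ(ϖ))` annihilates `L = τ ϖ`, so the span of the vectors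
`Lᵏ s` (`s ∈ S`, `k ∈ ℕ`) is finite-dimensional. It is `L`-stable, and `U_F`-stable because `Fˣ`
is commutative. A finite-dimensional subspace stable under `τ g` is also stable under `τ g⁻¹`,
as `τ g` restricts to an injective, hence bijective, endomorphism of it; so the span is stable
under `ϖ^ℤ · U_F = Fˣ`. -/

open Polynomial Submodule

theorem IsLocallyConstant.finite_image_of_isCompact {X Y : Type*} [TopologicalSpace X]
    {f : X → Y} (hf : IsLocallyConstant f) {K : Set X} (hK : IsCompact K) : (f '' K).Finite := by
  have : CompactSpace K := isCompact_iff_compactSpace.mp hK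
  rw [← Subtype.range_coe (s := K), ← Set.range_comp]
  exact (hf.comp_continuous continuous_subtype_val).range_finite

namespace Module.End

variable {K E : Type*} [Field K] [AddCommGroup E] [Module K E]

theorem aeval_prod_X_sub_C_apply_eq_zero {r : ℕ} (L : End K E) (V : Fin (r + 1) → Submodule K E)
    (μ : Fin r → K) (hV0 : V 0 = ⊥) (hstep : ∀ i, ∀ x ∈ V i.succ, L x - μ i • x ∈ V i.castSucc)
    {x : E} (hx : x ∈ V (Fin.last r)) : aeval L (∏ i, (X - C (μ i))) x = 0 := by
  induction r generalizing x with
  | zero =>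
    rw [show Fin.last 0 = 0 from rfl, hV0, mem_bot] at hx
    simp [hx]
  | succ r ih =>
    have hlast : aeval L (X - C (μ (Fin.last r))) x ∈ V (Fin.last r).castSucc := by
      simpa [Module.algebraMap_end_apply] using hstep (Fin.last r) x (by rwa [Fin.succ_last])
    rw [Fin.prod_univ_castSucc, map_mul, mul_apply]
    exact ih (V ∘ Fin.castSucc) (μ ∘ Fin.castSucc) hV0
      (fun i y hy => hstep i.castSucc y (by rwa [Fin.succ_castSucc])) hlast

theorem pow_apply_mem_span_of_aeval_eq_zero (L : End K E) {p : K[X]} (hp : p.Monic)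
    (hL : aeval L p = 0) (k : ℕ) (s : E) :
    (L ^ k) s ∈ span K ((fun j => (L ^ j) s) '' Set.Iic p.natDegree) := by
  have hmod : L ^ k = aeval L (X ^ k %ₘ p) := by
    rw [aeval_modByMonic_eq_self_of_root hL, map_pow, aeval_X]
  rw [hmod, aeval_eq_sum_range' (Nat.lt_succ_of_le (natDegree_modByMonic_le _ hp))]
  simp only [LinearMap.sum_apply, LinearMap.smul_apply]
  exact sum_mem fun j hj => smul_mem _ _ <|
    subset_span ⟨j, Nat.lt_succ_iff.mp (Finset.mem_range.mp hj), rfl⟩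

def invtSpan (L : End K E) (S : Set E) : Submodule K E :=
  span K {x | ∃ k : ℕ, ∃ s ∈ S, (L ^ k) s = x}

variable (L : End K E) (S : Set E)

theorem subset_invtSpan : S ⊆ invtSpan L S :=
  fun s hs => subset_span ⟨0, s, hs, rfl⟩

theorem invtSpan_mem_invtSubmodule : invtSpan L S ∈ L.invtSubmodule := by
  refine (mem_invtSubmodule _).mpr (span_le.mpr ?_)
  rintro _ ⟨k, s, hs, rfl⟩
  exact subset_span ⟨k + 1, s, hs, by rw [pow_succ', mul_apply]⟩

theorem invtSpan_mem_invtSubmodule_of_commute {A : End K E} (hAL : Commute A L)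
    (hAS : Set.MapsTo A S S) : invtSpan L S ∈ A.invtSubmodule := by
  refine (mem_invtSubmodule _).mpr (span_le.mpr ?_)
  rintro _ ⟨k, s, hs, rfl⟩
  exact subset_span ⟨k, A s, hAS hs, by rw [← mul_apply, ← (hAL.pow_right k).eq, mul_apply]⟩

theorem finiteDimensional_invtSpan {p : K[X]} (hp : p.Monic) (hL : aeval L p = 0)
    (hS : S.Finite) : FiniteDimensional K (invtSpan L S) := by
  have hle : invtSpan L S ≤ span K (Set.image2 (fun j s => (L ^ j) s) (Set.Iic p.natDegree) S) := by
    refine span_le.mpr ?_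
    rintro _ ⟨k, s, hs, rfl⟩
    refine span_mono ?_ (pow_apply_mem_span_of_aeval_eq_zero L hp hL k s)
    rintro _ ⟨j, hj, rfl⟩
    exact Set.mem_image2_of_mem hj hs
  have := FiniteDimensional.span_of_finite K ((Set.finite_Iic p.natDegree).image2
    (fun j s => (L ^ j) s) hS)
  exact Submodule.finiteDimensional_of_le hle

theorem mem_invtSubmodule_of_mul_eq_one {W : Submodule K E} [FiniteDimensional K W]
    {A B : End K E} (hBA : B * A = 1) (hW : W ∈ A.invtSubmodule) : W ∈ B.invtSubmodule := by
  have hBA' (x : E) : B (A x) = x := by rw [← mul_apply, hBA, one_apply]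
  have hinj : Function.Injective (A.restrict hW) := fun x y hxy =>
    have hA : A x = A y := congr_arg Subtype.val hxy
    Subtype.ext <| by simpa [hBA'] using congr_arg B hA
  intro x hx
  obtain ⟨y, hy⟩ := LinearMap.injective_iff_surjective.mp hinj ⟨x, hx⟩
  have hAy : A y = x := congr_arg Subtype.val hy
  show B x ∈ W
  rw [← hAy, hBA']
  exact y.2

end Module.End

namespace Representation

theorem isLocallyConstant_apply {K G E : Type*} [CommSemiring K] [Group G] [AddCommMonoid E]
    [Module K E] (ρ : Representation K G E) [TopologicalSpace G] [ContinuousMul G] {v : E}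
    {W : Subgroup G} (hW : IsOpen (W : Set G)) (hv : ∀ w ∈ W, ρ w v = v) :
    IsLocallyConstant fun g => ρ g v := by
  refine (IsLocallyConstant.iff_exists_open _).mpr fun g => ⟨(g⁻¹ * ·) ⁻¹' W,
    hW.preimage (continuous_const_mul _), by simp, fun h hh => ?_⟩
  show ρ h v = ρ g v
  rw [← mul_inv_cancel_left g h, map_mul, Module.End.mul_apply, hv _ hh]

variable {K G E : Type*} [Field K] [Group G] [AddCommGroup E] [Module K E]
  (ρ : Representation K G E)

def stabilizerOfFiniteDimensional (W : Submodule K E) [FiniteDimensional K W] : Subgroup G where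
  carrier := {g | W ∈ Module.End.invtSubmodule (ρ g)}
  one_mem' := by simp
  mul_mem' {g h} hg hh := by
    show W ∈ Module.End.invtSubmodule (ρ (g * h))
    rw [map_mul]
    exact Module.End.invtSubmodule.comp _ hg hh
  inv_mem' {g} hg := Module.End.mem_invtSubmodule_of_mul_eq_one (by simp [← map_mul]) hg

end Representation

open Module.End in
theorem stmt_1_general {F : Type*} [Field F] [TopologicalSpace F] [IsTopologicalRing F]
    (UF : Subgroup Fˣ) (hUFcompact : IsCompact (UF : Set Fˣ))
    (ϖ : Fˣ) (hdec : ∀ z : Fˣ, ∃ (n : ℤ) (u : Fˣ), u ∈ UF ∧ z = ϖ ^ n * u)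
    {E : Type*} [AddCommGroup E] [Module ℂ E]
    (τ : Representation ℂ Fˣ E)
    (hsmooth : ∀ v : E, ∃ W : Subgroup Fˣ, IsOpen (W : Set Fˣ) ∧ ∀ u ∈ W, τ u v = v)
    (r : ℕ) (Efil : Fin (r + 1) → Submodule ℂ E)
    (hbot : Efil 0 = ⊥) (htop : Efil (Fin.last r) = ⊤)
    (c : Fin r → (Fˣ →* ℂˣ))
    (hquot : ∀ (i : Fin r) (t : Fˣ), ∀ v ∈ Efil i.succ,
      τ t v - (c i t : ℂ) • v ∈ Efil i.castSucc)
    (v : E) :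
    ∃ W : Submodule ℂ E, v ∈ W ∧ (∀ t : Fˣ, ∀ w ∈ W, τ t w ∈ W) ∧
      FiniteDimensional ℂ W := by
  obtain ⟨Wv, hWv, hv⟩ := hsmooth v
  set S := (fun u => τ u v) '' UF
  have hS : S.Finite := (τ.isLocallyConstant_apply hWv hv).finite_image_of_isCompact hUFcompact
  have hann : aeval (τ ϖ) (∏ i, (X - C (c i ϖ : ℂ))) = 0 := LinearMap.ext fun x =>
    aeval_prod_X_sub_C_apply_eq_zero _ Efil _ hbot (fun i => hquot i ϖ) (htop ▸ mem_top)
  have hfin := finiteDimensional_invtSpan (τ ϖ) S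
    (monic_prod_of_monic _ _ fun i _ => monic_X_sub_C _) hann hS
  have hUF : UF ≤ τ.stabilizerOfFiniteDimensional (invtSpan (τ ϖ) S) := fun u hu =>
    invtSpan_mem_invtSubmodule_of_commute _ _ (by rw [Commute, SemiconjBy, ← map_mul, ← map_mul,
      mul_comm]) (by rintro _ ⟨u', hu', rfl⟩; exact ⟨u * u', UF.mul_mem hu hu', by simp⟩)
  refine ⟨invtSpan (τ ϖ) S, subset_invtSpan _ _ ⟨1, UF.one_mem, by simp⟩, fun t => ?_, hfin⟩
  obtain ⟨n, u, hu, rfl⟩ := hdec t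
  exact Subgroup.mul_mem _ (Subgroup.zpow_mem _ (invtSpan_mem_invtSubmodule _ _) n) (hUF hu)

/-- Let `F` be a nonarchimedean local field, with compact open unit
group `UF ⊆ Fˣ` and uniformizer `ϖ` (so that every `z ∈ Fˣ` is `ϖ ^ n * u` with
`u ∈ UF`).  Let `E` be a smooth `Fˣ`-module with a finite filtration by
`Fˣ`-submodules such that `Fˣ` acts by a character `c i` on each successive quotient.
Then every vector of `E` lies in a finite-dimensional `Fˣ`-invariant subspace. -/
theorem stmt_1 {F : Type*} [Field F] [TopologicalSpace F] [IsTopologicalRing F]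
    (UF : Subgroup Fˣ) (hUFopen : IsOpen (UF : Set Fˣ)) (hUFcompact : IsCompact (UF : Set Fˣ))
    (ϖ : Fˣ) (hdec : ∀ z : Fˣ, ∃ (n : ℤ) (u : Fˣ), u ∈ UF ∧ z = ϖ ^ n * u)
    {E : Type*} [AddCommGroup E] [Module ℂ E]
    (τ : Representation ℂ Fˣ E)
    (hsmooth : ∀ v : E, ∃ W : Subgroup Fˣ, IsOpen (W : Set Fˣ) ∧ ∀ u ∈ W, τ u v = v)
    (r : ℕ) (Efil : Fin (r + 1) → Submodule ℂ E) (hmono : Monotone Efil)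
    (hbot : Efil 0 = ⊥) (htop : Efil (Fin.last r) = ⊤)
    (c : Fin r → (Fˣ →* ℂˣ))
    (hquot : ∀ (i : Fin r) (t : Fˣ), ∀ v ∈ Efil i.succ,
      τ t v - (c i t : ℂ) • v ∈ Efil i.castSucc)
    (v : E) :
    ∃ W : Submodule ℂ E, v ∈ W ∧ (∀ t : Fˣ, ∀ w ∈ W, τ t w ∈ W) ∧
      FiniteDimensional ℂ W :=
  stmt_1_general UF hUFcompact ϖ hdec τ hsmooth r Efil hbot htop c hquot v
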